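/- arXiv:2211.10356 — 3 statements merged into one kernel-verified Lean document; each statement's English description precedes it below -/
import Mathlib

section
/- For every positive integer n and every integer i with 2^{i-1} n ≤ k ≤ 2^i n − 1, the rectangle of dimensions 1/k × 1/(k+1) has width 1/k at most 1/(2^{i-1} n); consequently the rectangles P_{2^{i-1}n}, ..., P_{2^i n − 1}, placed side by side along their 1/(k+1)-sides, fit in a row of height 1/(2^{i-1} n) and length ∑_{k=2^{i-1}n}^{2^i n − 1} 1/(k+1) ≤ ln 2 + 1/(2^{i-1} n). -/
open Set

/-- The open axis-aligned rectangle with lower-left corner `p`, width `w` and height `h`. -/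
def openRect (p : ℝ × ℝ) (w h : ℝ) : Set (ℝ × ℝ) :=
  Set.Ioo p.1 (p.1 + w) ×ˢ Set.Ioo p.2 (p.2 + h)

/-- The rectangles of dimensions `w i × h i` can be packed into the region `R`:
axis-aligned placements (translations, and 90° rotations swapping the two sides, allowed)
with pairwise disjoint interiors, all contained in `R`. -/
def RectsPackIn {ι : Type*} (w h : ι → ℝ) (R : Set (ℝ × ℝ)) : Prop :=
  ∃ (pos : ι → ℝ × ℝ) (rot : ι → Bool),
    (∀ i, openRect (pos i) (if rot i then h i else w i) (if rot i then w i else h i) ⊆ R) ∧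
    ∀ i j, i ≠ j →
      Disjoint (openRect (pos i) (if rot i then h i else w i) (if rot i then w i else h i))
        (openRect (pos j) (if rot j then h j else w j) (if rot j then w j else h j))

lemma term_le_log (k : ℕ) (hk : 1 ≤ k) :
    (1 : ℝ) / (k + 1) ≤ Real.log (k + 1) - Real.log k := by
  have hk0 : (0 : ℝ) < k := by exact_mod_cast hk
  have hk1 : (0 : ℝ) < (k : ℝ) + 1 := by linarith
  have h := Real.log_le_sub_one_of_pos (x := (k : ℝ) / (k + 1)) (by positivity)
  rw [Real.log_div (by positivity) (by positivity)] at h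
  have : (k : ℝ) / (k + 1) - 1 = -(1 / (k + 1)) := by field_simp; ring
  rw [this] at h
  linarith

lemma sum_le_log_two (m : ℕ) (hm : 1 ≤ m) :
    ∑ k ∈ Finset.Ico m (2 * m), (1 : ℝ) / (k + 1) ≤ Real.log 2 := by
  have hcast : ∀ k ∈ Finset.Ico m (2 * m),
      (1 : ℝ) / (k + 1) ≤ Real.log (k + 1) - Real.log k := by
    intro k hk
    exact term_le_log k (le_trans hm (Finset.mem_Ico.mp hk).1)
  calc ∑ k ∈ Finset.Ico m (2 * m), (1 : ℝ) / (k + 1)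
      ≤ ∑ k ∈ Finset.Ico m (2 * m), (Real.log (k + 1) - Real.log k) :=
        Finset.sum_le_sum hcast
    _ = Real.log (2 * (m : ℝ)) - Real.log m := by
        rw [Finset.sum_Ico_eq_sum_range]
        have key := Finset.sum_range_sub (fun j : ℕ => Real.log (m + j)) (2 * m - m)
        have heq : ∑ k ∈ Finset.range (2 * m - m), (Real.log ((m + k : ℕ) + 1) - Real.log ((m + k : ℕ) : ℝ))
            = ∑ k ∈ Finset.range (2 * m - m), (Real.log ((m : ℝ) + (k + 1 : ℕ)) - Real.log ((m : ℝ) + k)) := by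
          apply Finset.sum_congr rfl
          intro k _
          push_cast
          ring_nf
        rw [heq, key]
        have h2 : 2 * m - m = m := by omega
        rw [h2]
        push_cast
        ring_nf
    _ = Real.log 2 := by
        have hm0 : (0 : ℝ) < m := by exact_mod_cast hm
        rw [Real.log_mul (by norm_num) (ne_of_gt hm0)]
        ring

/-- For a positive integer `n` and integer `i ≥ 1`, every `k` with
`2^{i-1} n ≤ k ≤ 2^i n - 1` satisfies `1/k ≤ 1/(2^{i-1} n)`; consequently the rectangles
`P_{2^{i-1}n}, …, P_{2^i n - 1}` (with `P_k` of dimensions `1/k × 1/(k+1)`), placed side by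
side along their `1/(k+1)`-sides, fit in a row of height `1/(2^{i-1} n)` and length
`∑_{k=2^{i-1}n}^{2^i n - 1} 1/(k+1) ≤ ln 2 + 1/(2^{i-1} n)`. -/
theorem row_packing (n i : ℕ) (hn : 1 ≤ n) (hi : 1 ≤ i) :
    (∀ k : ℕ, 2 ^ (i - 1) * n ≤ k → k ≤ 2 ^ i * n - 1 →
      (1 : ℝ) / k ≤ 1 / (2 ^ (i - 1) * n)) ∧
    (∑ k ∈ Finset.Icc (2 ^ (i - 1) * n) (2 ^ i * n - 1), (1 : ℝ) / (k + 1)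
      ≤ Real.log 2 + 1 / (2 ^ (i - 1) * (n : ℝ))) ∧
    RectsPackIn (ι := {k : ℕ // 2 ^ (i - 1) * n ≤ k ∧ k ≤ 2 ^ i * n - 1})
      (fun k => (1 : ℝ) / (k : ℕ)) (fun k => (1 : ℝ) / ((k : ℕ) + 1))
      (Set.Icc 0 (∑ k ∈ Finset.Icc (2 ^ (i - 1) * n) (2 ^ i * n - 1), (1 : ℝ) / (k + 1)) ×ˢ
        Set.Icc 0 (1 / (2 ^ (i - 1) * (n : ℝ)))) := by
  set m := 2 ^ (i - 1) * n with hm_def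
  have hm : 1 ≤ m := Nat.one_le_iff_ne_zero.mpr (by positivity)
  have h2i : 2 ^ i * n = 2 * m := by
    have hp : 2 ^ i = 2 * 2 ^ (i - 1) := by
      conv_lhs => rw [show i = (i - 1) + 1 from by omega]
      rw [pow_succ']
    rw [hm_def, hp]
    ring
  have hIcc : Finset.Icc m (2 ^ i * n - 1) = Finset.Ico m (2 * m) := by
    rw [h2i, ← Finset.Ico_add_one_right_eq_Icc]
    congr 1
    omega
  have hmR : (0 : ℝ) < (m : ℝ) := by exact_mod_cast hm
  have hcastM : (2 : ℝ) ^ (i - 1) * (n : ℝ) = (m : ℝ) := by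
    rw [hm_def]; push_cast; ring
  -- part 1
  have part1 : ∀ k : ℕ, 2 ^ (i - 1) * n ≤ k → k ≤ 2 ^ i * n - 1 →
      (1 : ℝ) / k ≤ 1 / (2 ^ (i - 1) * n) := by
    intro k hk1 _
    have hkR : (m : ℝ) ≤ (k : ℝ) := by exact_mod_cast hk1
    rw [show ((2 : ℝ) ^ (i - 1) * (n : ℕ) : ℝ) = (m : ℝ) by exact_mod_cast hcastM]
    exact one_div_le_one_div_of_le hmR hkR
  refine ⟨part1, ?_, ?_⟩
  · rw [hIcc, hcastM]
    have := sum_le_log_two m hm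
    have : (0:ℝ) < 1 / (m : ℝ) := by positivity
    linarith [sum_le_log_two m hm]
  · -- the packing
    set S : ℕ → ℝ := fun k => ∑ j ∈ Finset.Ico m k, (1 : ℝ) / (j + 1) with hS
    have hSmono : ∀ a b : ℕ, a ≤ b → S a ≤ S b := by
      intro a b hab
      apply Finset.sum_le_sum_of_subset_of_nonneg
      · exact Finset.Ico_subset_Ico le_rfl hab
      · intro j _ _; positivity
    have hSstep : ∀ k : ℕ, m ≤ k → S k + 1 / ((k : ℝ) + 1) = S (k + 1) := by
      intro k hk
      rw [hS]
      simp only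
      rw [Finset.sum_Ico_succ_top hk]
    refine ⟨fun k => (S k.1, 0), fun _ => true, ?_, ?_⟩
    · rintro ⟨k, hk1, hk2⟩
      simp only [if_pos, openRect]
      apply Set.prod_mono
      · apply Set.Ioo_subset_Icc_self.trans
        apply Set.Icc_subset_Icc
        · rw [hS]; simp only; positivity
        · rw [hSstep k hk1, hIcc]
          apply hSmono
          omega
      · apply Set.Ioo_subset_Icc_self.trans
        apply Set.Icc_subset_Icc le_rfl
        rw [hcastM, zero_add]
        have hkR : (m : ℝ) ≤ (k : ℝ) := by exact_mod_cast hk1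
        exact one_div_le_one_div_of_le hmR hkR
    · rintro ⟨a, ha1, ha2⟩ ⟨b, hb1, hb2⟩ hab
      have hne : a ≠ b := by simpa using hab
      have key : ∀ x y : ℕ, m ≤ x → x < y →
          Disjoint (Set.Ioo (S x) (S x + 1 / ((x : ℝ) + 1)))
            (Set.Ioo (S y) (S y + 1 / ((y : ℝ) + 1))) := by
        intro x y hx hxy
        rw [Set.Ioo_disjoint_Ioo]
        have h1 : S x + 1 / ((x : ℝ) + 1) ≤ S y := by
          rw [hSstep x hx]
          exact hSmono _ _ hxy
        exact le_trans (inf_le_left) (le_trans h1 le_sup_right)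
      simp only [if_pos, openRect]
      rcases lt_or_gt_of_ne hne with h | h
      · exact Set.disjoint_of_subset (Set.prod_mono_right Set.Ioo_subset_Icc_self)
          (Set.prod_mono_right Set.Ioo_subset_Icc_self)
          (Set.Disjoint.set_prod_left (key a b ha1 h) _ _) |>.mono
          (Set.prod_mono_right (le_refl _)) (le_refl _)
      · exact (Set.Disjoint.set_prod_left (key b a hb1 h) _ _).symm
end

section
/- For every integer n ≥ 1000, the sum of the heights of the rows of the packing construction, ∑_{i=1}^∞ 1/(2^{i-1} n), equals 2/n, so all rectangles P_k with k ≥ n can be packed into a rectangular box of dimensions (2/n) × (ln 2 + 1/(2n)). -/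
open Set

lemma sum_inv_le_log (a b : ℕ) (ha : 1 ≤ a) (hab : a ≤ b) :
    ∑ m ∈ Finset.Ico a b, (1 : ℝ) / (m + 1) ≤ Real.log b - Real.log a := by
  have key : ∀ m ∈ Finset.Ico a b,
      (1:ℝ)/(m+1) ≤ Real.log ((m:ℕ)+1 : ℕ) - Real.log m := by
    intro m hm
    have hm1 : 1 ≤ m := le_trans ha (Finset.mem_Ico.mp hm).1
    have hmpos : (0:ℝ) < m := by exact_mod_cast hm1
    have h1 : Real.log ((m:ℝ)/(m+1)) ≤ (m:ℝ)/(m+1) - 1 :=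
      Real.log_le_sub_one_of_pos (by positivity)
    have hlog : Real.log ((m:ℝ)/(m+1)) = Real.log m - Real.log ((m:ℝ)+1) :=
      Real.log_div (ne_of_gt hmpos) (by positivity)
    have h2 : (m:ℝ)/(m+1) - 1 = -(1/((m:ℝ)+1)) := by field_simp; ring
    push_cast
    rw [hlog, h2] at h1
    linarith
  calc ∑ m ∈ Finset.Ico a b, (1:ℝ)/(m+1)
      ≤ ∑ m ∈ Finset.Ico a b, (Real.log ((m+1 : ℕ)) - Real.log m) := Finset.sum_le_sum key
    _ = Real.log b - Real.log a := by
        rw [Finset.sum_Ico_eq_sub _ hab,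
          Finset.sum_range_sub (fun m : ℕ => Real.log m),
          Finset.sum_range_sub (fun m : ℕ => Real.log m)]
        simp

lemma openRect_subset {p : ℝ × ℝ} {w h a b c d : ℝ}
    (h1 : a ≤ p.1) (h2 : p.1 + w ≤ b) (h3 : c ≤ p.2) (h4 : p.2 + h ≤ d) :
    openRect p w h ⊆ Set.Icc a b ×ˢ Set.Icc c d :=
  Set.prod_mono (Set.Ioo_subset_Icc_self.trans (Set.Icc_subset_Icc h1 h2))
    (Set.Ioo_subset_Icc_self.trans (Set.Icc_subset_Icc h3 h4))

lemma disjoint_openRect_fst {p q : ℝ × ℝ} {w1 h1 w2 h2 : ℝ} (h : p.1 + w1 ≤ q.1) :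
    Disjoint (openRect p w1 h1) (openRect q w2 h2) := by
  rw [Set.disjoint_left]
  rintro ⟨a, b⟩ hm hm'
  have := hm.1.2
  have := hm'.1.1
  simp only at *
  linarith

lemma disjoint_openRect_snd {p q : ℝ × ℝ} {w1 h1 w2 h2 : ℝ} (h : p.2 + h1 ≤ q.2) :
    Disjoint (openRect p w1 h1) (openRect q w2 h2) := by
  rw [Set.disjoint_left]
  rintro ⟨a, b⟩ hm hm'
  have := hm.2.2
  have := hm'.2.1
  simp only at *
  linarith

/-- For every integer `n ≥ 1000`, the heights of the rows sum to
`∑_{i=1}^∞ 1/(2^{i-1} n) = 2/n`, and all rectangles `P_k` with `k ≥ n` can be packed into a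
rectangular box of dimensions `(2/n) × (ln 2 + 1/(2n))`. -/
theorem tail_packs_in_box (n : ℕ) (hn : 1000 ≤ n) :
    HasSum (fun i : ℕ => 1 / (2 ^ i * (n : ℝ))) (2 / n) ∧
    RectsPackIn (ι := {k : ℕ // n ≤ k})
      (fun k => (1 : ℝ) / (k : ℕ)) (fun k => (1 : ℝ) / ((k : ℕ) + 1))
      (Set.Icc 0 (Real.log 2 + 1 / (2 * (n : ℝ))) ×ˢ Set.Icc 0 (2 / (n : ℝ))) := by
  have hn0 : 0 < n := by omega
  have hN : (0:ℝ) < n := by exact_mod_cast hn0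
  constructor
  · -- the geometric series
    have hg := hasSum_geometric_of_lt_one (r := (1:ℝ)/2) (by norm_num) (by norm_num)
    have h2 : ((1:ℝ) - 1/2)⁻¹ = 2 := by norm_num
    rw [h2] at hg
    have hg' := hg.mul_right ((1:ℝ)/n)
    have heq : (fun i : ℕ => 1 / (2 ^ i * (n : ℝ))) = fun i : ℕ => ((1:ℝ)/2)^i * (1/n) := by
      funext i
      rw [div_pow, one_pow, div_mul_div_comm, one_mul]
    rw [heq, show (2:ℝ)/n = 2 * (1/n) by rw [mul_one_div]]
    exact hg'
  · -- the packing
    set row : ℕ → ℕ := fun k => Nat.log 2 (k / n) with hrowdef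
    have hrow_le : ∀ k, n ≤ k → 2 ^ row k * n ≤ k := by
      intro k hk
      have hd : 1 ≤ k / n := (Nat.one_le_div_iff hn0).mpr hk
      have h1 : 2 ^ Nat.log 2 (k / n) ≤ k / n := Nat.pow_log_le_self 2 (by omega)
      exact (Nat.le_div_iff_mul_le hn0).mp h1
    have hrow_lt : ∀ k, k < 2 ^ (row k + 1) * n := by
      intro k
      have := Nat.lt_pow_succ_log_self (by norm_num : 1 < 2) (k / n)
      exact (Nat.div_lt_iff_lt_mul hn0).mp this
    set x : ℕ → ℝ := fun k => ∑ m ∈ Finset.Ico (2 ^ row k * n) k, (1:ℝ)/(m+1) with hxdef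
    set y : ℕ → ℝ := fun i => 2/(n:ℝ) - 2/(2^i * n) with hydef
    have hx0 : ∀ k, 0 ≤ x k := by
      intro k
      apply Finset.sum_nonneg
      intro m _
      positivity
    have hy0 : ∀ i, 0 ≤ y i := by
      intro i
      have h1 : (1:ℝ) ≤ 2^i := by exact_mod_cast Nat.one_le_two_pow (n := i)
      have : 2/(2^i * (n:ℝ)) ≤ 2/(n:ℝ) := by
        apply div_le_div_of_nonneg_left (by norm_num) hN
        nlinarith
      simp only [hydef]
      linarith
    have hystep : ∀ i, y i + 1/(2^i * (n:ℝ)) = y (i+1) := by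
      intro i
      simp only [hydef]
      have h2i : (0:ℝ) < 2^i := by positivity
      field_simp
      ring
    have hymono : ∀ i j, i ≤ j → y i ≤ y j := by
      intro i j hij
      simp only [hydef]
      have h1 : (2:ℝ)^i ≤ 2^j := pow_le_pow_right₀ (by norm_num) hij
      have h2i : (0:ℝ) < 2^i := by positivity
      have : 2/(2^j * (n:ℝ)) ≤ 2/(2^i * (n:ℝ)) := by
        apply div_le_div_of_nonneg_left (by norm_num) (by positivity)
        nlinarith
      linarith
    have hytop : ∀ i, y i + 1/(2^i * (n:ℝ)) ≤ 2/n := by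
      intro i
      rw [hystep i]
      have := hy0 (i+1)
      simp only [hydef] at *
      have : (0:ℝ) < 2/(2^(i+1) * (n:ℝ)) := by positivity
      linarith
    -- the key horizontal bound
    have hxtop : ∀ k, n ≤ k → x k + 1/((k:ℝ)+1) ≤ Real.log 2 := by
      intro k hk
      have hki := hrow_le k hk
      have hki' := hrow_lt k
      have hA1 : 1 ≤ 2 ^ row k * n := by
        have : 0 < 2 ^ row k * n := Nat.mul_pos (Nat.pow_pos (by norm_num)) hn0
        omega
      have step1 : x k + 1/((k:ℝ)+1) = ∑ m ∈ Finset.Ico (2 ^ row k * n) (k+1), (1:ℝ)/(m+1) := by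
        rw [Finset.sum_Ico_succ_top hki]
      have step2 : ∑ m ∈ Finset.Ico (2 ^ row k * n) (k+1), (1:ℝ)/(m+1)
          ≤ ∑ m ∈ Finset.Ico (2 ^ row k * n) (2 ^ (row k + 1) * n), (1:ℝ)/(m+1) := by
        apply Finset.sum_le_sum_of_subset_of_nonneg
        · exact Finset.Ico_subset_Ico le_rfl hki'
        · intro m _ _; positivity
      have step3 : ∑ m ∈ Finset.Ico (2 ^ row k * n) (2 ^ (row k + 1) * n), (1:ℝ)/(m+1)
          ≤ Real.log (2 ^ (row k + 1) * n : ℕ) - Real.log (2 ^ row k * n : ℕ) :=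
        sum_inv_le_log _ _ hA1 (by omega)
      have hcast : ((2 ^ (row k + 1) * n : ℕ) : ℝ) = 2 * ((2 ^ row k * n : ℕ) : ℝ) := by
        push_cast
        ring
      have hApos : (0:ℝ) < ((2 ^ row k * n : ℕ) : ℝ) := by
        exact_mod_cast hA1
      have step4 : Real.log ((2 ^ (row k + 1) * n : ℕ) : ℝ)
          = Real.log 2 + Real.log ((2 ^ row k * n : ℕ) : ℝ) := by
        rw [hcast, Real.log_mul (by norm_num) (ne_of_gt hApos)]
      rw [step1]
      rw [step4] at step3
      linarith
    -- the key vertical bound per rectangle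
    have hyrect : ∀ k, n ≤ k → 1/(k:ℝ) ≤ 1/(2^(row k) * (n:ℝ)) := by
      intro k hk
      have hki := hrow_le k hk
      have hki' : (2:ℝ)^(row k) * n ≤ k := by exact_mod_cast hki
      have hApos : (0:ℝ) < 2^(row k) * n := by positivity
      exact one_div_le_one_div_of_le hApos hki'
    refine ⟨fun k => (x k, y (row k)), fun _ => true, ?_, ?_⟩
    · -- containment
      rintro ⟨k, hk⟩
      simp only [ite_true]
      have hkpos : (0:ℝ) < k := by
        have : 0 < k := by omega
        exact_mod_cast this
      apply openRect_subset
      · exact hx0 k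
      · have h1 := hxtop k hk
        have h2 : (0:ℝ) < 1/(2*(n:ℝ)) := by positivity
        simp only
        linarith
      · exact hy0 (row k)
      · have h1 := hyrect k hk
        have h2 := hytop (row k)
        simp only
        linarith
    · -- disjointness
      rintro ⟨k, hk⟩ ⟨k', hk'⟩ hne
      simp only [ite_true]
      have hkk' : k ≠ k' := by
        intro h; exact hne (Subtype.ext h)
      -- helper for the same-row case
      have hsame : ∀ a b : ℕ, n ≤ a → a < b → row a = row b → x a + 1/((a:ℝ)+1) ≤ x b := by
        intro a b ha hab hr
        have hai := hrow_le a ha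
        have step1 : x a + 1/((a:ℝ)+1) = ∑ m ∈ Finset.Ico (2 ^ row a * n) (a+1), (1:ℝ)/(m+1) := by
          rw [Finset.sum_Ico_succ_top hai]
        rw [step1]
        have : x b = ∑ m ∈ Finset.Ico (2 ^ row a * n) b, (1:ℝ)/(m+1) := by
          simp only [hxdef, hr]
        rw [this]
        apply Finset.sum_le_sum_of_subset_of_nonneg
        · exact Finset.Ico_subset_Ico le_rfl (by omega)
        · intro m _ _; positivity
      -- helper for the different-row case
      have hdiff : ∀ a b : ℕ, n ≤ a → row a < row b → y (row a) + 1/(a:ℝ) ≤ y (row b) := by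
        intro a b ha hr
        have h1 := hyrect a ha
        have h2 := hystep (row a)
        have h3 := hymono (row a + 1) (row b) (by omega)
        calc y (row a) + 1/(a:ℝ) ≤ y (row a) + 1/(2^(row a) * (n:ℝ)) := by linarith
          _ = y (row a + 1) := h2
          _ ≤ y (row b) := h3
      rcases lt_trichotomy (row k) (row k') with hr | hr | hr
      · exact disjoint_openRect_snd (by simpa using hdiff k k' hk hr)
      · rcases lt_or_gt_of_ne hkk' with hlt | hgt
        · exact disjoint_openRect_fst (by simpa using hsame k k' hk hlt hr)
        · exact (disjoint_openRect_fst (by simpa using hsame k' k hk' hgt hr.symm)).symm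
      · exact (disjoint_openRect_snd (by simpa using hdiff k' k hk' hr)).symm
end

section
/- Suppose the rectangles P_1, ..., P_{n−1} (where P_i has dimensions 1/i × 1/(i+1)) can be packed into the unit square, and n ≥ 1000. Then all rectangles P_i for i ≥ 1 can be packed into the square of side length 1 + 1/n. -/
open Set

/-- Harmonic-type sums. -/
noncomputable def Hh (b : ℕ) : ℝ := ∑ j ∈ Finset.range b, (1 : ℝ) / (j + 1)

lemma Hh_succ (b : ℕ) : Hh (b + 1) = Hh b + 1 / ((b : ℝ) + 1) := by
  simp [Hh, Finset.sum_range_succ]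

lemma Hh_mono : Monotone Hh := by
  apply monotone_nat_of_le_succ
  intro b
  rw [Hh_succ]
  have : (0:ℝ) ≤ 1 / ((b : ℝ) + 1) := by positivity
  linarith

lemma Hh_sub_lt {m i : ℕ} (hm : 1 ≤ m) (h1 : m ≤ i) (h2 : i < 2 * m) :
    Hh (i + 1) - Hh m < 1 := by
  have heq : ∑ j ∈ Finset.Ico m (i + 1), (1:ℝ)/(j+1) = Hh (i+1) - Hh m := by
    simp only [Hh]
    exact Finset.sum_Ico_eq_sub _ (by omega)
  rw [← heq]
  have hb : ∑ j ∈ Finset.Ico m (i+1), (1:ℝ)/(j+1)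
      ≤ (Finset.Ico m (i+1)).card • ((1:ℝ)/(m+1)) := by
    apply Finset.sum_le_card_nsmul
    intro j hj
    rw [Finset.mem_Ico] at hj
    have h0 : (0:ℝ) < (m:ℝ) + 1 := by positivity
    have : (m:ℝ) + 1 ≤ (j:ℝ) + 1 := by
      have : (m:ℝ) ≤ j := by exact_mod_cast hj.1
      linarith
    exact one_div_le_one_div_of_le h0 this
  have hcard : (Finset.Ico m (i+1)).card = i + 1 - m := Nat.card_Ico _ _
  have hle : ((i + 1 - m : ℕ) : ℝ) ≤ (m : ℝ) := by exact_mod_cast (by omega : i + 1 - m ≤ m)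
  have h0 : (0:ℝ) < (m:ℝ) + 1 := by positivity
  calc ∑ j ∈ Finset.Ico m (i+1), (1:ℝ)/(j+1)
      ≤ (Finset.Ico m (i+1)).card • ((1:ℝ)/(m+1)) := hb
    _ = ((i + 1 - m : ℕ) : ℝ) * (1/((m:ℝ)+1)) := by rw [hcard, nsmul_eq_mul]
    _ ≤ (m:ℝ) * (1/((m:ℝ)+1)) := mul_le_mul_of_nonneg_right hle (by positivity)
    _ < 1 := by rw [mul_one_div, div_lt_one h0]; linarith

lemma mem_openRect {p q : ℝ × ℝ} {w h : ℝ} :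
    p ∈ openRect q w h ↔ (q.1 < p.1 ∧ p.1 < q.1 + w) ∧ (q.2 < p.2 ∧ p.2 < q.2 + h) :=
  Iff.rfl

lemma openRect_subset_s12 {a b w h A B : ℝ} (ha : 0 ≤ a) (hw : a + w ≤ A)
    (hb : 0 ≤ b) (hh : b + h ≤ B) :
    openRect (a, b) w h ⊆ Set.Icc 0 A ×ˢ Set.Icc 0 B := by
  rintro ⟨x, y⟩ hp
  obtain ⟨⟨h1, h2⟩, h3, h4⟩ := mem_openRect.mp hp
  simp only at h1 h2 h3 h4
  exact ⟨⟨by linarith, by linarith⟩, ⟨by linarith, by linarith⟩⟩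

lemma disj_fst {s : Set (ℝ × ℝ)} {c : ℝ} (hs : ∀ p ∈ s, p.1 ≤ c) {q : ℝ × ℝ} {w h : ℝ}
    (hq : c ≤ q.1) : Disjoint s (openRect q w h) := by
  rw [Set.disjoint_left]
  intro p hp hp'
  have h1 := hs p hp
  have h2 := (mem_openRect.mp hp').1.1
  linarith

lemma disj_snd {s : Set (ℝ × ℝ)} {c : ℝ} (hs : ∀ p ∈ s, p.2 ≤ c) {q : ℝ × ℝ} {w h : ℝ}
    (hq : c ≤ q.2) : Disjoint s (openRect q w h) := by
  rw [Set.disjoint_left]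
  intro p hp hp'
  have h1 := hs p hp
  have h2 := (mem_openRect.mp hp').2.1
  linarith

lemma disjX {q q' : ℝ × ℝ} {w h w' h' : ℝ} (hle : q.1 + w ≤ q'.1) :
    Disjoint (openRect q w h) (openRect q' w' h') :=
  disj_fst (fun p hp => le_of_lt (mem_openRect.mp hp).1.2) hle

lemma disjY {q q' : ℝ × ℝ} {w h w' h' : ℝ} (hle : q.2 + h ≤ q'.2) :
    Disjoint (openRect q w h) (openRect q' w' h') :=
  disj_snd (fun p hp => le_of_lt (mem_openRect.mp hp).2.2) hle

/-- Group index of rectangle `i` (for `i ≥ n`). -/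
def Kk (n i : ℕ) : ℕ := Nat.log 2 (i / n)

lemma Mm_le {n i : ℕ} (hn : 1 ≤ n) (hni : n ≤ i) : n * 2 ^ Kk n i ≤ i := by
  have h1 : i / n ≠ 0 := by
    have := (Nat.one_le_div_iff (by omega : 0 < n)).mpr hni
    omega
  have h2 : 2 ^ Kk n i ≤ i / n := Nat.pow_log_le_self 2 h1
  calc n * 2 ^ Kk n i ≤ n * (i / n) := Nat.mul_le_mul_left _ h2
    _ = i / n * n := mul_comm _ _
    _ ≤ i := Nat.div_mul_le_self i n

lemma lt_two_Mm {n i : ℕ} (hn : 1 ≤ n) : i < 2 * (n * 2 ^ Kk n i) := by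
  have h2 : i / n < 2 ^ (Kk n i + 1) := Nat.lt_pow_succ_log_self (by norm_num) _
  have h3 : i < 2 ^ (Kk n i + 1) * n := (Nat.div_lt_iff_lt_mul (by omega : 0 < n)).mp h2
  calc i < 2 ^ (Kk n i + 1) * n := h3
    _ = 2 * (n * 2 ^ Kk n i) := by ring

noncomputable def npos (n i : ℕ) : ℝ × ℝ :=
  if Kk n i = 0 then (1, Hh i - Hh n)
  else (Hh i - Hh (n * 2 ^ Kk n i), 1 + (1 / (n : ℝ) - 2 / ((n : ℝ) * 2 ^ Kk n i)))

def nrot (n i : ℕ) : Bool := if Kk n i = 0 then false else true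

noncomputable def nrect (n i : ℕ) : Set (ℝ × ℝ) :=
  if Kk n i = 0 then openRect (1, Hh i - Hh n) (1 / (i : ℝ)) (1 / ((i : ℝ) + 1))
  else openRect (Hh i - Hh (n * 2 ^ Kk n i), 1 + (1 / (n : ℝ) - 2 / ((n : ℝ) * 2 ^ Kk n i)))
    (1 / ((i : ℝ) + 1)) (1 / (i : ℝ))

lemma nrect_eq (n i : ℕ) :
    openRect (npos n i) (if nrot n i then 1 / ((i : ℝ) + 1) else 1 / (i : ℝ))
      (if nrot n i then 1 / (i : ℝ) else 1 / ((i : ℝ) + 1)) = nrect n i := by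
  by_cases h : Kk n i = 0 <;> simp [npos, nrot, nrect, h]

lemma nrect_subset {n i : ℕ} (hn : 1 ≤ n) (hni : n ≤ i) :
    nrect n i ⊆ Set.Icc 0 (1 + 1/(n:ℝ)) ×ˢ Set.Icc 0 (1 + 1/(n:ℝ)) := by
  have hnR : (0:ℝ) < n := by exact_mod_cast hn
  have hiR : (0:ℝ) < i := by exact_mod_cast (by omega : 0 < i)
  have hinv : 1/(i:ℝ) ≤ 1/(n:ℝ) :=
    one_div_le_one_div_of_le hnR (by exact_mod_cast hni)
  by_cases h : Kk n i = 0
  · -- group 0 : m = n, i < 2n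
    have h2n : i < 2 * n := by
      have := lt_two_Mm (n := n) (i := i) hn
      rw [h] at this; simpa using this
    have hmono : Hh n ≤ Hh i := Hh_mono hni
    have hupper : Hh (i+1) - Hh n < 1 := Hh_sub_lt hn hni h2n
    have hsucc : Hh (i+1) = Hh i + 1/((i:ℝ)+1) := Hh_succ i
    rw [nrect, if_pos h]
    apply openRect_subset_s12
    · norm_num
    · linarith
    · linarith
    · have : (0:ℝ) ≤ 1/(n:ℝ) := by positivity
      linarith
  · -- group k ≥ 1
    have hk1 : 1 ≤ Kk n i := by omega
    set k := Kk n i with hk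
    set m := n * 2 ^ k with hmdef
    have hm1 : 1 ≤ m := by
      rw [hmdef]
      exact Nat.mul_pos (by omega) (by positivity)
    have hmi : m ≤ i := Mm_le hn hni
    have h2m : i < 2 * m := lt_two_Mm hn
    have hmR : ((m:ℕ):ℝ) = (n:ℝ) * 2 ^ k := by rw [hmdef]; push_cast; ring
    have hmpos : (0:ℝ) < (n:ℝ) * 2 ^ k := by positivity
    have hpow : (2:ℝ) ≤ 2 ^ k := by
      calc (2:ℝ) = 2 ^ 1 := (pow_one 2).symm
        _ ≤ 2 ^ k := pow_le_pow_right₀ (by norm_num) hk1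
    have hd : 2 / ((n:ℝ) * 2 ^ k) ≤ 1 / (n:ℝ) := by
      rw [div_le_div_iff₀ hmpos hnR]
      nlinarith
    have hmono : Hh m ≤ Hh i := Hh_mono hmi
    have hupper : Hh (i+1) - Hh m < 1 := Hh_sub_lt hm1 hmi h2m
    have hsucc : Hh (i+1) = Hh i + 1/((i:ℝ)+1) := Hh_succ i
    have hinvm : 1/(i:ℝ) ≤ 1/((n:ℝ) * 2 ^ k) := by
      rw [← hmR]
      exact one_div_le_one_div_of_le (by rw [hmR]; positivity) (by exact_mod_cast hmi)
    have hhalf : 1/((n:ℝ) * 2 ^ k) ≤ 2/((n:ℝ) * 2 ^ k) := by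
      rw [div_le_div_iff₀ hmpos hmpos]
      nlinarith
    rw [nrect, if_neg h]
    simp only [← hk, ← hmdef]
    apply openRect_subset_s12
    · linarith
    · have : (0:ℝ) ≤ 1/(n:ℝ) := by positivity
      linarith
    · linarith
    · linarith

lemma nrect_disj_old {n i : ℕ} {s : Set (ℝ × ℝ)}
    (hs : s ⊆ Set.Icc 0 1 ×ˢ Set.Icc 0 1) (hn : 1 ≤ n) (hni : n ≤ i) :
    Disjoint s (nrect n i) := by
  have hnR : (0:ℝ) < n := by exact_mod_cast hn
  by_cases h : Kk n i = 0
  · rw [nrect, if_pos h]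
    exact disj_fst (fun p hp => (hs hp).1.2) (le_refl 1)
  · have hk1 : 1 ≤ Kk n i := by omega
    set k := Kk n i with hk
    have hmpos : (0:ℝ) < (n:ℝ) * 2 ^ k := by positivity
    have hpow : (2:ℝ) ≤ 2 ^ k := by
      calc (2:ℝ) = 2 ^ 1 := (pow_one 2).symm
        _ ≤ 2 ^ k := pow_le_pow_right₀ (by norm_num) hk1
    have hd : 2 / ((n:ℝ) * 2 ^ k) ≤ 1 / (n:ℝ) := by
      rw [div_le_div_iff₀ hmpos hnR]
      nlinarith
    rw [nrect, if_neg h]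
    simp only [← hk]
    exact disj_snd (fun p hp => (hs hp).2.2) (by simp only; linarith)

lemma nrect_disj {n i j : ℕ} (hn : 1 ≤ n) (hni : n ≤ i) (hij : i < j) :
    Disjoint (nrect n i) (nrect n j) := by
  have hnR : (0:ℝ) < n := by exact_mod_cast hn
  have hkk : Kk n i ≤ Kk n j :=
    Nat.log_mono_right (Nat.div_le_div_right (by omega))
  have hsucc : Hh (i+1) = Hh i + 1/((i:ℝ)+1) := Hh_succ i
  by_cases hi0 : Kk n i = 0
  · by_cases hj0 : Kk n j = 0
    · -- both group 0: stack vertically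
      rw [nrect, if_pos hi0, nrect, if_pos hj0]
      apply disjY
      simp only
      have : Hh (i+1) ≤ Hh j := Hh_mono (by omega)
      linarith
    · -- i in group 0, j in group ≥ 1
      have h2n : i < 2 * n := by
        have := lt_two_Mm (n := n) (i := i) hn
        rw [hi0] at this; simpa using this
      have hupper : Hh (i+1) - Hh n < 1 := Hh_sub_lt hn hni h2n
      have hk1 : 1 ≤ Kk n j := by omega
      set k := Kk n j with hk
      have hmpos : (0:ℝ) < (n:ℝ) * 2 ^ k := by positivity
      have hpow : (2:ℝ) ≤ 2 ^ k := by
        calc (2:ℝ) = 2 ^ 1 := (pow_one 2).symm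
          _ ≤ 2 ^ k := pow_le_pow_right₀ (by norm_num) hk1
      have hd : 2 / ((n:ℝ) * 2 ^ k) ≤ 1 / (n:ℝ) := by
        rw [div_le_div_iff₀ hmpos hnR]
        nlinarith
      rw [nrect, if_pos hi0, nrect, if_neg hj0]
      simp only [← hk]
      apply disjY
      simp only
      linarith
  · have hj0 : Kk n j ≠ 0 := by omega
    by_cases hsame : Kk n i = Kk n j
    · -- same group ≥ 1: stack horizontally
      rw [nrect, if_neg hi0, nrect, if_neg hj0, hsame]
      apply disjX
      simp only
      have : Hh (i+1) ≤ Hh j := Hh_mono (by omega)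
      linarith
    · -- different groups ≥ 1
      have hlt : Kk n i < Kk n j := by omega
      set ki := Kk n i with hki
      set kj := Kk n j with hkj
      have hmpi : (0:ℝ) < (n:ℝ) * 2 ^ ki := by positivity
      have hmpj : (0:ℝ) < (n:ℝ) * 2 ^ kj := by positivity
      have hmi : n * 2 ^ ki ≤ i := Mm_le hn hni
      have hinvi : 1/(i:ℝ) ≤ 1/((n:ℝ) * 2 ^ ki) := by
        have hmR : ((n * 2 ^ ki : ℕ):ℝ) = (n:ℝ) * 2 ^ ki := by push_cast; ring
        rw [← hmR]
        exact one_div_le_one_div_of_le (by rw [hmR]; positivity) (by exact_mod_cast hmi)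
      have hpowle : (2:ℝ) * 2 ^ ki ≤ 2 ^ kj := by
        calc (2:ℝ) * 2 ^ ki = 2 ^ (ki + 1) := by ring
          _ ≤ 2 ^ kj := pow_le_pow_right₀ (by norm_num) (by omega)
      have hdd : 2 / ((n:ℝ) * 2 ^ kj) ≤ 1 / ((n:ℝ) * 2 ^ ki) := by
        rw [div_le_div_iff₀ hmpj hmpi]
        nlinarith
      have h2X : 2/((n:ℝ) * 2 ^ ki) = 2 * (1/((n:ℝ) * 2 ^ ki)) := by ring
      rw [nrect, if_neg hi0, nrect, if_neg hj0]
      simp only [← hki, ← hkj]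
      apply disjY
      simp only
      linarith

/-- If the rectangles `P_1, …, P_{n-1}` (where `P_i` has dimensions `1/i × 1/(i+1)`) can
be packed into the unit square and `n ≥ 1000`, then all rectangles `P_i`, `i ≥ 1`, can be
packed into the square of side length `1 + 1/n`. -/
theorem pack_all_in_enlarged_square (n : ℕ) (hn : 1000 ≤ n)
    (hpack : RectsPackIn (ι := {i : ℕ // 1 ≤ i ∧ i < n})
      (fun i => (1 : ℝ) / (i : ℕ)) (fun i => (1 : ℝ) / ((i : ℕ) + 1))
      (Set.Icc 0 1 ×ˢ Set.Icc 0 1)) :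
    RectsPackIn (ι := {i : ℕ // 1 ≤ i})
      (fun i => (1 : ℝ) / (i : ℕ)) (fun i => (1 : ℝ) / ((i : ℕ) + 1))
      (Set.Icc 0 (1 + 1 / (n : ℝ)) ×ˢ Set.Icc 0 (1 + 1 / (n : ℝ))) := by
  obtain ⟨pos0, rot0, hsub0, hdis0⟩ := hpack
  have hn1 : 1 ≤ n := by omega
  have hnR : (0:ℝ) < n := by exact_mod_cast hn1
  have hmonoIcc : Set.Icc (0:ℝ) 1 ×ˢ Set.Icc (0:ℝ) 1
      ⊆ Set.Icc 0 (1 + 1/(n:ℝ)) ×ˢ Set.Icc 0 (1 + 1/(n:ℝ)) := by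
    have h1 : (1:ℝ) ≤ 1 + 1/(n:ℝ) := by
      have : (0:ℝ) ≤ 1/(n:ℝ) := by positivity
      linarith
    exact Set.prod_mono (Set.Icc_subset_Icc le_rfl h1) (Set.Icc_subset_Icc le_rfl h1)
  refine ⟨fun i => if h : (i:ℕ) < n then pos0 ⟨i, i.2, h⟩ else npos n i,
      fun i => if h : (i:ℕ) < n then rot0 ⟨i, i.2, h⟩ else nrot n i, ?_, ?_⟩
  · intro i
    by_cases h : (i:ℕ) < n
    · simp only [dif_pos h]
      exact (hsub0 ⟨i, i.2, h⟩).trans hmonoIcc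
    · simp only [dif_neg h]
      rw [nrect_eq]
      exact nrect_subset hn1 (by omega)
  · intro i j hij
    have hijn : (i:ℕ) ≠ (j:ℕ) := fun hc => hij (Subtype.ext hc)
    by_cases hi : (i:ℕ) < n <;> by_cases hj : (j:ℕ) < n
    · simp only [dif_pos hi, dif_pos hj]
      exact hdis0 ⟨i, i.2, hi⟩ ⟨j, j.2, hj⟩
        (by simp only [ne_eq, Subtype.mk.injEq]; exact hijn)
    · simp only [dif_pos hi, dif_neg hj]
      rw [nrect_eq]
      exact nrect_disj_old (hsub0 ⟨i, i.2, hi⟩) hn1 (by omega)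
    · simp only [dif_neg hi, dif_pos hj]
      rw [nrect_eq]
      exact (nrect_disj_old (hsub0 ⟨j, j.2, hj⟩) hn1 (by omega)).symm
    · simp only [dif_neg hi, dif_neg hj]
      rw [nrect_eq, nrect_eq]
      rcases lt_or_gt_of_ne hijn with hlt | hlt
      · exact nrect_disj hn1 (by omega) hlt
      · exact (nrect_disj hn1 (by omega) hlt).symm
end
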